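/- arXiv:2410.13495 — 2 statements merged into one kernel-verified Lean document; each statement's English description precedes it below -/
import Mathlib

section
/- If (G₁, G₂) is a centered bivariate Gaussian vector with G₁ and G₂ not almost surely equal, then the random variable min(G₁, G₂) is not Gaussian. -/
open MeasureTheory ProbabilityTheory Real

/-!
Compare moment generating functions. Since `min G₁ G₂ ≤ Gᵢ`, the Gaussian mgf
`exp (μ t + v t² / 2)` of the minimum lies below that of `Gᵢ` for `t ≥ 0` and above it for
`t ≤ 0`, which forces the two variances to agree and `μ ≤ 0`. The bound
`exp (-t min G₁ G₂) ≤ exp (-t G₁) + exp (-t G₂)` then gives `-μ t ≤ log 2` for all `t > 0`,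
so `μ = 0`. Thus the minimum has the same law as each `Gᵢ` while lying below it, hence
equals both almost surely.
-/

lemma nonpos_of_forall_pos_mul_le {c K : ℝ} (h : ∀ t > 0, c * t ≤ K) : c ≤ 0 := by
  by_contra! hc
  have := h ((|K| + 1) / c) (by positivity)
  rw [mul_div_cancel₀ _ hc.ne'] at this
  linarith [le_abs_self K]

section

variable {Ω : Type*} [MeasurableSpace Ω] {P : Measure Ω} {X Y : Ω → ℝ}

lemma ae_eq_of_ae_le_of_map_eq [IsFiniteMeasure P] (hX : AEMeasurable X P)
    (hY : AEMeasurable Y P) (hXY : X ≤ᵐ[P] Y) (hmap : P.map X = P.map Y) : X =ᵐ[P] Y := by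
  -- `arctan` is bounded, so integrable, and strictly monotone, so its integral detects `X < Y`
  have hint {Z : Ω → ℝ} (hZ : AEMeasurable Z P) : Integrable (fun ω ↦ arctan (Z ω)) P :=
    .of_bound (continuous_arctan.measurable.comp_aemeasurable hZ).aestronglyMeasurable (π / 2)
      (ae_of_all _ fun ω ↦ abs_le.mpr
        ⟨(neg_pi_div_two_lt_arctan _).le, (arctan_lt_pi_div_two _).le⟩)
  have heq : ∫ ω, arctan (X ω) ∂P = ∫ ω, arctan (Y ω) ∂P := by
    rw [← integral_map hX continuous_arctan.aestronglyMeasurable, hmap,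
      integral_map hY continuous_arctan.aestronglyMeasurable]
  have harctan := (integral_eq_iff_of_ae_le (hint hX) (hint hY)
    (hXY.mono fun ω h ↦ arctan_strictMono.monotone h)).mp heq
  exact harctan.mono fun ω h ↦ arctan_injective h

lemma mgf_min_le_add {t : ℝ} (hX : Integrable (fun ω ↦ exp (t * X ω)) P)
    (hY : Integrable (fun ω ↦ exp (t * Y ω)) P) :
    mgf (fun ω ↦ min (X ω) (Y ω)) P t ≤ mgf X P t + mgf Y P t := by
  rw [mgf, mgf, mgf, ← integral_add hX hY]
  refine integral_mono_of_nonneg (ae_of_all _ fun ω ↦ (exp_pos _).le) (hX.add hY)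
    (ae_of_all _ fun ω ↦ ?_)
  rcases min_choice (X ω) (Y ω) with h | h <;> simp only [h] <;>
    linarith [exp_pos (t * X ω), exp_pos (t * Y ω)]

variable [IsProbabilityMeasure P] {μ m : ℝ} {v w : NNReal}

lemma integrable_exp_mul_of_map_eq_gaussianReal (hX : P.map X = gaussianReal μ v) (t : ℝ) :
    Integrable (fun ω ↦ exp (t * X ω)) P := by
  rw [← mgf_pos_iff, mgf_gaussianReal hX]
  exact exp_pos _

lemma gaussianReal_var_eq_and_mean_le_of_ae_le (hX : P.map X = gaussianReal μ v)
    (hY : P.map Y = gaussianReal m w) (hXY : X ≤ᵐ[P] Y) : v = w ∧ μ ≤ m := by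
  have hpos {t : ℝ} (ht : 0 ≤ t) : μ * t + v * t ^ 2 / 2 ≤ m * t + w * t ^ 2 / 2 := by
    have := mgf_mono_of_nonneg hXY ht (integrable_exp_mul_of_map_eq_gaussianReal hY t)
    rwa [mgf_gaussianReal hX, mgf_gaussianReal hY, exp_le_exp] at this
  have hneg {t : ℝ} (ht : t ≤ 0) : m * t + w * t ^ 2 / 2 ≤ μ * t + v * t ^ 2 / 2 := by
    have := mgf_anti_of_nonpos hXY ht (integrable_exp_mul_of_map_eq_gaussianReal hX t)
    rwa [mgf_gaussianReal hX, mgf_gaussianReal hY, exp_le_exp] at this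
  -- dividing by `|t|` leaves a linear function of `t` bounded by `m - μ`
  have hvw : (v : ℝ) ≤ w := by
    have := nonpos_of_forall_pos_mul_le (c := ((v : ℝ) - w) / 2) (K := m - μ) fun t ht ↦
      le_of_mul_le_mul_right (by nlinarith [hpos ht.le]) ht
    linarith
  have hwv : (w : ℝ) ≤ v := by
    have := nonpos_of_forall_pos_mul_le (c := ((w : ℝ) - v) / 2) (K := m - μ) fun t ht ↦
      le_of_mul_le_mul_right (by nlinarith [hneg (neg_nonpos.mpr ht.le)]) ht
    linarith
  have hvw_eq : (v : ℝ) = w := le_antisymm hvw hwv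
  refine ⟨NNReal.coe_injective hvw_eq, ?_⟩
  have := hpos zero_le_one
  rw [hvw_eq] at this
  linarith

lemma le_mean_of_map_min_eq_gaussianReal (hX : P.map X = gaussianReal m v)
    (hY : P.map Y = gaussianReal m v)
    (hmin : P.map (fun ω ↦ min (X ω) (Y ω)) = gaussianReal μ v) : m ≤ μ := by
  have hbound (t : ℝ) (ht : 0 < t) : (m - μ) * t ≤ log 2 := by
    have := mgf_min_le_add (t := -t) (integrable_exp_mul_of_map_eq_gaussianReal hX _)
      (integrable_exp_mul_of_map_eq_gaussianReal hY _)
    rw [mgf_gaussianReal hX, mgf_gaussianReal hY, mgf_gaussianReal hmin, ← two_mul, mul_comm 2,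
      ← div_le_iff₀' (exp_pos _), ← exp_sub, ← le_log_iff_exp_le two_pos] at this
    linarith
  linarith [nonpos_of_forall_pos_mul_le hbound]

end

theorem stmt4_general {Ω : Type*} [MeasurableSpace Ω]
    (P : Measure Ω) [IsProbabilityMeasure P]
    (G₁ G₂ : Ω → ℝ)
    (hgauss : ∀ a b : ℝ, ∃ v : NNReal,
      Measure.map (fun ω => a * G₁ ω + b * G₂ ω) P = gaussianReal 0 v)
    (hne : P {ω | G₁ ω ≠ G₂ ω} ≠ 0) :
    ¬ ∃ (μ : ℝ) (v : NNReal),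
      Measure.map (fun ω => min (G₁ ω) (G₂ ω)) P = gaussianReal μ v := by
  rintro ⟨μ, v, hmin⟩
  obtain ⟨v₁, h₁⟩ := hgauss 1 0
  obtain ⟨v₂, h₂⟩ := hgauss 0 1
  simp only [one_mul, zero_mul, add_zero, zero_add] at h₁ h₂
  obtain ⟨rfl, hμ⟩ := gaussianReal_var_eq_and_mean_le_of_ae_le hmin h₁
    (ae_of_all _ fun ω ↦ min_le_left _ _)
  obtain ⟨rfl, -⟩ := gaussianReal_var_eq_and_mean_le_of_ae_le hmin h₂
    (ae_of_all _ fun ω ↦ min_le_right _ _)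
  obtain rfl : μ = 0 := le_antisymm hμ (le_mean_of_map_min_eq_gaussianReal h₁ h₂ hmin)
  have hmeas {X : Ω → ℝ} {σ : NNReal} (hX : P.map X = gaussianReal 0 σ) : AEMeasurable X P :=
    aemeasurable_of_map_neZero (by rw [hX]; infer_instance)
  have hmin₁ := ae_eq_of_ae_le_of_map_eq (hmeas hmin) (hmeas h₁)
    (ae_of_all _ fun ω ↦ min_le_left _ _) (hmin.trans h₁.symm)
  have hmin₂ := ae_eq_of_ae_le_of_map_eq (hmeas hmin) (hmeas h₂)
    (ae_of_all _ fun ω ↦ min_le_right _ _) (hmin.trans h₂.symm)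
  exact hne (ae_iff.mp (hmin₁.symm.trans hmin₂))

/-- A centered bivariate Gaussian vector: every linear combination of the two
coordinates is a centered (possibly degenerate) Gaussian random variable. -/
theorem stmt4 {Ω : Type*} [MeasurableSpace Ω]
    (P : Measure Ω) [IsProbabilityMeasure P]
    (G₁ G₂ : Ω → ℝ) (hm1 : Measurable G₁) (hm2 : Measurable G₂)
    (hgauss : ∀ a b : ℝ, ∃ v : NNReal,
      Measure.map (fun ω => a * G₁ ω + b * G₂ ω) P = gaussianReal 0 v)
    (hne : P {ω | G₁ ω ≠ G₂ ω} ≠ 0) :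
    ¬ ∃ (μ : ℝ) (v : NNReal),
      Measure.map (fun ω => min (G₁ ω) (G₂ ω)) P = gaussianReal μ v :=
  stmt4_general P G₁ G₂ hgauss hne
end

section
/- Let P_r (0 ≤ r ≤ 1/2) be the mixture of uniform distributions on (−1−r,−1+r), (−r,r), and (1−r,1+r), each with weight 1/3. Then the optimal within-cluster sum of squares for k = 2 equals (2r² + 1)/6 when 0 ≤ r ≤ 3√2 − 4, and (11r² − 8r + 8)/36 when 3√2 − 4 < r ≤ 1/2. -/
open MeasureTheory

/-- Uniform distribution on the open ball `B(c, r) ⊂ ℝ` (the point mass at `c` if `r = 0`). -/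
noncomputable def unifBall (c r : ℝ) : Measure ℝ :=
  if r = 0 then Measure.dirac c
  else ENNReal.ofReal (1 / (2 * r)) • (volume.restrict (Set.Ioo (c - r) (c + r)))

/-- The mixture `P_r` of uniform distributions on `B(-1,r)`, `B(0,r)` and `B(1,r)`
with equal weights `1/3`. -/
noncomputable def Pr (r : ℝ) : Measure ℝ :=
  (3 : ENNReal)⁻¹ • (unifBall (-1) r + unifBall 0 r + unifBall 1 r)

/-- The optimal within-cluster sum of squares for `k = 2`. -/
noncomputable def W2 (P : Measure ℝ) : ℝ :=
  ⨅ p : ℝ × ℝ, ∫ x, min ((x - p.1) ^ 2) ((x - p.2) ^ 2) ∂P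

lemma sqInt (a l u : ℝ) : (∫ x in l..u, (x - a) ^ 2) = ((u - a) ^ 3 - (l - a) ^ 3) / 3 := by
  have h := intervalIntegral.integral_comp_sub_right (a := l) (b := u) (fun x => x ^ 2) a
  rw [h, integral_pow]
  norm_num

lemma integrable_ball {r : ℝ} {g : ℝ → ℝ} (hg : Continuous g) (c : ℝ) :
    Integrable g (volume.restrict (Set.Ioo (c - r) (c + r))) :=
  (hg.integrableOn_Icc).mono_set Set.Ioo_subset_Icc_self

lemma integrable_unifBall {r : ℝ} (hr : 0 < r) {g : ℝ → ℝ} (hg : Continuous g) (c : ℝ) :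
    Integrable g (unifBall c r) := by
  rw [unifBall, if_neg hr.ne']
  exact (integrable_ball hg c).smul_measure ENNReal.ofReal_ne_top

lemma integral_Pr {r : ℝ} (hr : 0 < r) {g : ℝ → ℝ} (hg : Continuous g) :
    ∫ x, g x ∂(Pr r) = (6 * r)⁻¹ *
      ((∫ x in (-1 - r)..(-1 + r), g x) + ((∫ x in (-r)..r, g x) + (∫ x in (1 - r)..(1 + r), g x))) := by
  have hb : ∀ c : ℝ, ∫ x, g x ∂(unifBall c r) = (2 * r)⁻¹ * ∫ x in (c - r)..(c + r), g x := by
    intro c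
    rw [unifBall, if_neg hr.ne', integral_smul_measure, ENNReal.toReal_ofReal (by positivity),
      intervalIntegral.integral_of_le (by linarith), integral_Ioc_eq_integral_Ioo]
    simp [smul_eq_mul]
  rw [Pr, integral_smul_measure,
    integral_add_measure ((integrable_unifBall hr hg _).add_measure (integrable_unifBall hr hg _))
      (integrable_unifBall hr hg _),
    integral_add_measure (integrable_unifBall hr hg _) (integrable_unifBall hr hg _),
    hb, hb, hb]
  have : ((3 : ENNReal)⁻¹).toReal = 3⁻¹ := by simp
  rw [this]
  have h2 : (2 * r)⁻¹ ≠ 0 := by positivity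
  field_simp
  simp only [smul_eq_mul, zero_sub, zero_add]
  field_simp
  ring

lemma master (R T X D S a b V : ℝ) (hR : 0 < R) (hT0 : 0 ≤ T) (hT1 : T ≤ R)
    (key : X ^ 2 ≤ D * (T * (R - T))) (hD : 0 ≤ D) (hV : V ≤ S - D / 4) :
    V ≤ S + (a ^ 2 * T - a * X + b * X + b ^ 2 * (R - T)) / R := by
  have main : -(D / 4) * R ≤ a ^ 2 * T - a * X + b * X + b ^ 2 * (R - T) := by
    rcases eq_or_lt_of_le hT0 with h0 | h0
    · have hT : T = 0 := h0.symm
      subst hT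
      have hX2 : X ^ 2 = 0 := le_antisymm (by nlinarith) (sq_nonneg X)
      have hX : X = 0 := pow_eq_zero_iff (n := 2) (by norm_num) |>.mp hX2
      rw [hX]
      nlinarith [sq_nonneg b, mul_nonneg hD hR.le]
    rcases eq_or_lt_of_le hT1 with h1 | h1
    · subst h1
      have hX2 : X ^ 2 = 0 := le_antisymm (by nlinarith) (sq_nonneg X)
      have hX : X = 0 := pow_eq_zero_iff (n := 2) (by norm_num) |>.mp hX2
      rw [hX]
      nlinarith [sq_nonneg a, mul_nonneg hD hR.le]
    · have h1' : 0 < R - T := by linarith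
      have hq : 0 ≤ 4 * T * (R - T) *
          ((a ^ 2 * T - a * X + b * X + b ^ 2 * (R - T)) + R * D / 4) := by
        nlinarith [mul_nonneg h1'.le (sq_nonneg (2 * a * T - X)),
          mul_nonneg h0.le (sq_nonneg (2 * b * (R - T) + X)),
          mul_le_mul_of_nonneg_left key hR.le]
      have hpos : 0 < 4 * T * (R - T) := by positivity
      have := (mul_nonneg_iff_of_pos_left hpos).mp hq
      linarith
  have hdiv : -(D / 4) ≤ (a ^ 2 * T - a * X + b * X + b ^ 2 * (R - T)) / R :=
    (le_div_iff₀ hR).mpr main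
  linarith

lemma contMin (a b : ℝ) : Continuous fun x : ℝ => min ((x - a) ^ 2) ((x - b) ^ 2) :=
  Continuous.min (by continuity) (by continuity)

lemma intLeft {a b m l u : ℝ} (hab : a ≤ b) (hm : a + b = 2 * m) (hu : u ≤ m) (hlu : l ≤ u) :
    (∫ x in l..u, min ((x - a) ^ 2) ((x - b) ^ 2)) = ((u - a) ^ 3 - (l - a) ^ 3) / 3 := by
  rw [show ((u - a) ^ 3 - (l - a) ^ 3) / 3 = ∫ x in l..u, (x - a) ^ 2 from (sqInt a l u).symm]
  apply intervalIntegral.integral_congr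
  intro x hx
  rw [Set.uIcc_of_le hlu] at hx
  exact min_eq_left (by nlinarith [hx.1, hx.2])

lemma intRight {a b m l u : ℝ} (hab : a ≤ b) (hm : a + b = 2 * m) (hl : m ≤ l) (hlu : l ≤ u) :
    (∫ x in l..u, min ((x - a) ^ 2) ((x - b) ^ 2)) = ((u - b) ^ 3 - (l - b) ^ 3) / 3 := by
  rw [show ((u - b) ^ 3 - (l - b) ^ 3) / 3 = ∫ x in l..u, (x - b) ^ 2 from (sqInt b l u).symm]
  apply intervalIntegral.integral_congr
  intro x hx
  rw [Set.uIcc_of_le hlu] at hx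
  exact min_eq_right (by nlinarith [hx.1, hx.2])

lemma intSplit {a b m l u : ℝ} (hab : a ≤ b) (hm : a + b = 2 * m) (hl : l ≤ m) (hu : m ≤ u) :
    (∫ x in l..u, min ((x - a) ^ 2) ((x - b) ^ 2)) =
      ((m - a) ^ 3 - (l - a) ^ 3) / 3 + ((u - b) ^ 3 - (m - b) ^ 3) / 3 := by
  rw [← intervalIntegral.integral_add_adjacent_intervals
      ((contMin a b).intervalIntegrable l m) ((contMin a b).intervalIntegrable m u),
    intLeft hab hm le_rfl hl, intRight hab hm le_rfl hu]

set_option maxHeartbeats 2000000 in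
lemma lowerpos {r : ℝ} (hr : 0 < r) (hr1 : r ≤ 1 / 2) (D V : ℝ) (hD : 0 ≤ D)
    (hVD : V ≤ (r ^ 2 / 3 + 2 / 3) - D / 4)
    (hV5 : V ≤ (2 * r ^ 2 + 1) / 6)
    (hkey : ∀ m : ℝ, -r < m → m ≤ r →
      (m ^ 2 - r ^ 2 - 4 * r) ^ 2 ≤ D * ((m + 3 * r) * (3 * r - m)))
    (a b : ℝ) :
    V ≤ ∫ x, min ((x - a) ^ 2) ((x - b) ^ 2) ∂(Pr r) := by
  have hr' : r ≠ 0 := hr.ne'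
  suffices H : ∀ a b : ℝ, a ≤ b → V ≤ ∫ x, min ((x - a) ^ 2) ((x - b) ^ 2) ∂(Pr r) by
    rcases le_total a b with hab | hab
    · exact H a b hab
    · calc V ≤ ∫ x, min ((x - b) ^ 2) ((x - a) ^ 2) ∂(Pr r) := H b a hab
        _ = _ := by congr 1; funext x; exact min_comm _ _
  clear a b
  intro a b hab
  set m := (a + b) / 2 with hmdef
  have hm : a + b = 2 * m := by rw [hmdef]; ring
  rw [integral_Pr hr (contMin a b)]
  rcases le_or_gt m (-1 - r) with h1 | h1
  · -- R0
    rw [intRight hab hm (by linarith) (by linarith),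
        intRight hab hm (by linarith) (by linarith),
        intRight hab hm (by linarith) (by linarith)]
    refine le_trans (master (6 * r) 0 0 0 (r ^ 2 / 3 + 2 / 3) a b V (by positivity)
      le_rfl (by linarith) (by norm_num) le_rfl (by linarith))
      (le_of_eq ?_)
    field_simp
    ring
  rcases le_or_gt m (-1 + r) with h2 | h2
  · -- left ball
    rw [intSplit hab hm (by linarith) (by linarith),
        intRight hab hm (by linarith) (by linarith),
        intRight hab hm (by linarith) (by linarith)]
    have hq : 0 ≤ (m + 1 + r) ^ 2 - (4 + 2 * r) * (m + 1 + r) + 6 := by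
      nlinarith [sq_nonneg (m + r)]
    have key : (m ^ 2 - (1 + r) ^ 2) ^ 2 ≤
        2 * ((m + 1 + r) * (6 * r - (m + 1 + r))) := by
      nlinarith [mul_nonneg (mul_nonneg (by linarith : (0:ℝ) ≤ m + 1 + r)
        (by linarith : (0:ℝ) ≤ 2 * r - (m + 1 + r))) hq]
    refine le_trans (master (6 * r) (m + 1 + r) (m ^ 2 - (1 + r) ^ 2) 2
      (r ^ 2 / 3 + 2 / 3) a b V (by positivity)
      (by linarith) (by linarith) key (by norm_num) (by linarith))
      (le_of_eq ?_)
    field_simp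
    ring
  rcases le_or_gt m (-r) with h3 | h3
  · -- gap 1
    rw [intLeft hab hm (by linarith) (by linarith),
        intRight hab hm (by linarith) (by linarith),
        intRight hab hm (by linarith) (by linarith)]
    refine le_trans (master (6 * r) (2 * r) (-(4 * r)) 2
      (r ^ 2 / 3 + 2 / 3) a b V (by positivity)
      (by linarith) (by linarith) (by nlinarith) (by norm_num) (by linarith))
      (le_of_eq ?_)
    field_simp
    ring
  rcases le_or_gt m r with h4 | h4
  · -- middle ball
    rw [intLeft hab hm (by linarith) (by linarith),
        intSplit hab hm (by linarith) (by linarith),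
        intRight hab hm (by linarith) (by linarith)]
    refine le_trans (master (6 * r) (m + 3 * r) (m ^ 2 - r ^ 2 - 4 * r) D
      (r ^ 2 / 3 + 2 / 3) a b V (by positivity)
      (by linarith) (by linarith) (by nlinarith [hkey m h3 h4]) hD (by linarith))
      (le_of_eq ?_)
    field_simp
    ring
  rcases le_or_gt m (1 - r) with h5 | h5
  · -- gap 2
    rw [intLeft hab hm (by linarith) (by linarith),
        intLeft hab hm (by linarith) (by linarith),
        intRight hab hm (by linarith) (by linarith)]
    refine le_trans (master (6 * r) (4 * r) (-(4 * r)) 2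
      (r ^ 2 / 3 + 2 / 3) a b V (by positivity)
      (by linarith) (by linarith) (by nlinarith) (by norm_num) (by linarith))
      (le_of_eq ?_)
    field_simp
    ring
  rcases le_or_gt m (1 + r) with h6 | h6
  · -- right ball
    rw [intLeft hab hm (by linarith) (by linarith),
        intLeft hab hm (by linarith) (by linarith),
        intSplit hab hm (by linarith) (by linarith)]
    have hq : 0 ≤ (1 + r - m) ^ 2 - (4 + 2 * r) * (1 + r - m) + 6 := by
      nlinarith [sq_nonneg (r - m)]
    have key : (m ^ 2 - (1 + r) ^ 2) ^ 2 ≤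
        2 * ((5 * r - 1 + m) * (6 * r - (5 * r - 1 + m))) := by
      nlinarith [mul_nonneg (mul_nonneg (by linarith : (0:ℝ) ≤ 1 + r - m)
        (by linarith : (0:ℝ) ≤ 2 * r - (1 + r - m))) hq]
    refine le_trans (master (6 * r) (5 * r - 1 + m) (m ^ 2 - (1 + r) ^ 2) 2
      (r ^ 2 / 3 + 2 / 3) a b V (by positivity)
      (by linarith) (by linarith) key (by norm_num) (by linarith))
      (le_of_eq ?_)
    field_simp
    ring
  · -- R6
    rw [intLeft hab hm (by linarith) (by linarith),
        intLeft hab hm (by linarith) (by linarith),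
        intLeft hab hm (by linarith) (by linarith)]
    refine le_trans (master (6 * r) (6 * r) 0 0 (r ^ 2 / 3 + 2 / 3) a b V (by positivity)
      (by linarith) le_rfl (by norm_num) le_rfl (by linarith))
      (le_of_eq ?_)
    field_simp
    ring

lemma W2_le (P : Measure ℝ) (a b : ℝ) :
    W2 P ≤ ∫ x, min ((x - a) ^ 2) ((x - b) ^ 2) ∂P := by
  unfold W2
  have hbdd : BddBelow (Set.range fun p : ℝ × ℝ =>
      ∫ x, min ((x - p.1) ^ 2) ((x - p.2) ^ 2) ∂P) := by
    refine ⟨0, ?_⟩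
    rintro y ⟨p, rfl⟩
    exact integral_nonneg fun x => le_min (sq_nonneg _) (sq_nonneg _)
  exact ciInf_le hbdd (a, b)

lemma le_W2 {P : Measure ℝ} {V : ℝ}
    (h : ∀ a b : ℝ, V ≤ ∫ x, min ((x - a) ^ 2) ((x - b) ^ 2) ∂P) : V ≤ W2 P := by
  unfold W2
  exact le_ciInf fun p => h p.1 p.2

lemma upper1 {r : ℝ} (hr : 0 < r) (hr4 : r ≤ 1 / 4) :
    (∫ x, min ((x - (-1)) ^ 2) ((x - (1 / 2 : ℝ)) ^ 2) ∂(Pr r)) = (2 * r ^ 2 + 1) / 6 := by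
  have hab : (-1 : ℝ) ≤ 1 / 2 := by norm_num
  have hm : (-1 : ℝ) + 1 / 2 = 2 * (-(1 / 4)) := by norm_num
  rw [integral_Pr hr (contMin _ _),
    intLeft hab hm (by linarith) (by linarith),
    intRight hab hm (by linarith) (by linarith),
    intRight hab hm (by linarith) (by linarith)]
  field_simp
  ring

lemma upper2 {r : ℝ} (hr : 0 < r) (hr1 : r ≤ 1 / 2) :
    (∫ x, min ((x - (-((r + 4) / 6))) ^ 2) ((x - ((r + 4) / 6)) ^ 2) ∂(Pr r)) =
      (11 * r ^ 2 - 8 * r + 8) / 36 := by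
  have hab : -((r + 4) / 6) ≤ (r + 4) / 6 := by linarith
  have hm : -((r + 4) / 6) + (r + 4) / 6 = 2 * 0 := by ring
  rw [integral_Pr hr (contMin _ _),
    intLeft hab hm (by linarith) (by linarith),
    intSplit hab hm (by linarith) (by linarith),
    intRight hab hm (by linarith) (by linarith)]
  field_simp
  ring

lemma integrable_dirac'' {g : ℝ → ℝ} (hg : Continuous g) (c : ℝ) :
    Integrable g (Measure.dirac c) := by
  refine ⟨hg.aestronglyMeasurable, ?_⟩
  simp [HasFiniteIntegral, lintegral_dirac]

lemma integral_Pr0 {g : ℝ → ℝ} (hg : Continuous g) :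
    ∫ x, g x ∂(Pr 0) = (g (-1) + g 0 + g 1) / 3 := by
  have h : ∀ c : ℝ, unifBall c 0 = Measure.dirac c := fun c => if_pos rfl
  rw [Pr, h, h, h, integral_smul_measure,
    integral_add_measure ((integrable_dirac'' hg _).add_measure (integrable_dirac'' hg _))
      (integrable_dirac'' hg _),
    integral_add_measure (integrable_dirac'' hg _) (integrable_dirac'' hg _),
    integral_dirac, integral_dirac, integral_dirac]
  have : ((3 : ENNReal)⁻¹).toReal = 3⁻¹ := by simp
  rw [this, smul_eq_mul]
  ring

set_option maxHeartbeats 2000000 in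
theorem stmt5 (r : ℝ) (h0 : 0 ≤ r) (h1 : r ≤ 1 / 2) :
    W2 (Pr r) =
      if r ≤ 3 * Real.sqrt 2 - 4 then (2 * r ^ 2 + 1) / 6
      else (11 * r ^ 2 - 8 * r + 8) / 36 := by
  have hs2 : Real.sqrt 2 ^ 2 = 2 := Real.sq_sqrt (by norm_num)
  have hs2nn : 0 ≤ Real.sqrt 2 := Real.sqrt_nonneg 2
  split_ifs with hc
  · -- case r ≤ 3√2 - 4
    have h18 : (r + 4) ^ 2 ≤ 18 := by nlinarith
    rcases eq_or_lt_of_le h0 with hr0 | hr0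
    · -- r = 0
      subst hr0
      apply le_antisymm
      · have h := W2_le (Pr 0) (-1) (1 / 2)
        rw [integral_Pr0 (contMin (-1) (1 / 2))] at h
        norm_num [min_def] at h ⊢
        linarith
      · apply le_W2
        intro a b
        rw [integral_Pr0 (contMin a b)]
        norm_num only
        rcases min_cases ((-1 - a) ^ 2) ((-1 - b) ^ 2) with ⟨e1, _⟩ | ⟨e1, _⟩ <;>
        rcases min_cases ((0 - a) ^ 2) ((0 - b) ^ 2) with ⟨e2, _⟩ | ⟨e2, _⟩ <;>
        rcases min_cases ((1 - a) ^ 2) ((1 - b) ^ 2) with ⟨e3, _⟩ | ⟨e3, _⟩ <;>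
        rw [e1, e2, e3] <;>
        nlinarith [sq_nonneg (2 * a + 1), sq_nonneg (2 * b + 1), sq_nonneg (2 * a - 1),
          sq_nonneg (2 * b - 1), sq_nonneg a, sq_nonneg b, sq_nonneg (a + 1), sq_nonneg (b - 1),
          sq_nonneg (a - 1), sq_nonneg (b + 1)]
    · -- 0 < r
      apply le_antisymm
      · have hr4 : r ≤ 1 / 4 := by nlinarith
        have h := W2_le (Pr r) (-1) (1 / 2)
        rwa [upper1 hr0 hr4] at h
      · apply le_W2
        intro a b
        refine lowerpos hr0 h1 2 _ (by norm_num) (le_of_eq (by ring)) le_rfl ?_ a b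
        intro m hm1 hm2
        have hu : m ^ 2 ≤ r ^ 2 := by nlinarith
        have h2 : 0 ≤ m ^ 2 + 18 - (r + 4) ^ 2 := by nlinarith [sq_nonneg m]
        nlinarith [mul_nonneg (sub_nonneg.2 hu) h2]
  · -- case r > 3√2 - 4
    push_neg at hc
    have h18 : 18 ≤ (r + 4) ^ 2 := by nlinarith
    have hr0 : 0 < r := by nlinarith
    apply le_antisymm
    · have h := W2_le (Pr r) (-((r + 4) / 6)) ((r + 4) / 6)
      rwa [upper2 hr0 h1] at h
    · apply le_W2
      intro a b
      refine lowerpos hr0 h1 ((r + 4) ^ 2 / 9) _ (by positivity) (le_of_eq (by ring))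
        (by nlinarith) ?_ a b
      intro m hm1 hm2
      have hu : m ^ 2 ≤ r ^ 2 := by nlinarith
      have h2 : 0 ≤ 8 * ((r + 4) ^ 2 - 18) + 9 * (r ^ 2 - m ^ 2) := by nlinarith
      nlinarith [mul_nonneg (sq_nonneg m) h2]
end
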